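/- arXiv:1602.02584 — 2 statements merged into one kernel-verified Lean document; each statement's English description precedes it below -/
import Mathlib

section
/- Let n ≥ 3 be an integer and let g ∈ ℤ[X] be a polynomial divisible by (X − 1)ⁿ·(X² + X + 1)·(X² + 1). Then 6 · n! divides the integer obtained by evaluating the n-th iterated formal derivative of g at 1. -/
open Polynomial

theorem stmt_4 (n : ℕ) (hn : 3 ≤ n) (g : ℤ[X])
    (hg : ((X - 1) ^ n * (X ^ 2 + X + 1) * (X ^ 2 + 1)) ∣ g) :
    (6 * (n.factorial : ℤ)) ∣ (Polynomial.derivative^[n] g).eval 1 := by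
  obtain ⟨q, rfl⟩ := hg
  have h1 : (derivative^[n] ((X - 1) ^ n * (X ^ 2 + X + 1) * (X ^ 2 + 1) * q)).eval 1
      = n.factorial • (hasseDeriv n ((X - 1) ^ n * (X ^ 2 + X + 1) * (X ^ 2 + 1) * q)).eval (1 : ℤ) := by
    rw [← Polynomial.factorial_smul_hasseDeriv]
    simp
  rw [h1, ← taylor_coeff]
  have hX1 : taylor (1 : ℤ) (X - 1) = X := by
    simp [taylor_apply]
  have h2 : taylor (1 : ℤ) ((X - 1) ^ n * (X ^ 2 + X + 1) * (X ^ 2 + 1) * q)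
      = X ^ n * taylor 1 ((X ^ 2 + X + 1) * (X ^ 2 + 1) * q) := by
    rw [show (X - 1) ^ n * (X ^ 2 + X + 1) * (X ^ 2 + 1) * q
        = (X - 1) ^ n * ((X ^ 2 + X + 1) * (X ^ 2 + 1) * q) by ring,
      taylor_mul]
    congr 1
    simp [taylor_apply]
  have h4 := coeff_X_pow_mul (taylor (1:ℤ) ((X ^ 2 + X + 1) * (X ^ 2 + 1) * q)) n 0
  rw [zero_add] at h4
  rw [h2, h4, taylor_coeff_zero]
  have h3 : ((X ^ 2 + X + 1) * (X ^ 2 + 1) * q : ℤ[X]).eval 1 = 6 * q.eval 1 := by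
    simp
  rw [h3]
  rw [nsmul_eq_mul]
  exact ⟨q.eval 1, by ring⟩
end

section
/- Let F be the field ℚ(x) of rational functions in one variable x over ℚ, and let V : ℕ → F be a sequence satisfying V(0) = −x − x⁻¹, V(1) = 1, and x⁻²·V(m−2) − x²·V(m) = (x − x⁻¹)·V(m−1) for every m ≥ 2. Then for every m ≥ 0, V(m) = (−x⁻¹)ᵐ·(−x − x⁻¹) + (−x^{1−3m})·(1 − (−x²)ᵐ)/(1 + x²). -/
private lemma stmt_8_X_ne : (RatFunc.X : RatFunc ℚ) ≠ 0 := RatFunc.X_ne_zero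

private lemma stmt_8_one_add_sq_ne : (1 + RatFunc.X ^ 2 : RatFunc ℚ) ≠ 0 := by
  have : (1 + RatFunc.X ^ 2 : RatFunc ℚ)
      = algebraMap (Polynomial ℚ) (RatFunc ℚ) (1 + Polynomial.X ^ 2) := by
    simp [map_add, map_pow, RatFunc.algebraMap_X]
  rw [this]
  simp only [ne_eq, IsFractionRing.to_map_eq_zero_iff]
  intro h
  have := congrArg (Polynomial.eval 0) h
  simp at this

private lemma stmt_8_aux {K : Type*} [Field K] (X : K) (hXne : X ≠ 0)
    (hsq : (1 : K) + X ^ 2 ≠ 0) (V : ℕ → K)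
    (h0 : V 0 = -X - X⁻¹) (h1 : V 1 = 1)
    (hrec : ∀ m : ℕ, 2 ≤ m →
      X ^ (-2 : ℤ) * V (m - 2) - X ^ 2 * V m = (X - X⁻¹) * V (m - 1)) :
    ∀ m : ℕ,
      V m = (-X⁻¹) ^ m * (-X - X⁻¹)
        + (-X ^ (1 - 3 * (m : ℤ))) * (1 - (-X ^ 2) ^ m) / (1 + X ^ 2) := by
  have hzp : ∀ k : ℕ, X ^ (1 - 3 * (k : ℤ)) = X * (X ^ (3 * k))⁻¹ := by
    intro k
    rw [zpow_sub₀ hXne, zpow_one]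
    norm_cast
    rw [div_eq_mul_inv]
  set f : ℕ → K := fun m =>
    (-X⁻¹) ^ m * (-X - X⁻¹) + (-X ^ (1 - 3 * (m : ℤ))) * (1 - (-X ^ 2) ^ m) / (1 + X ^ 2)
    with hf
  suffices H : ∀ n : ℕ, V n = f n ∧ V (n + 1) = f (n + 1) by
    intro m; exact (H m).1
  intro n
  induction n with
  | zero =>
    constructor
    · rw [h0, hf]; simp
    · rw [h1, hf]
      simp only [Nat.cast_one, pow_one, hzp 1]
      field_simp
      ring_nf
      field_simp
      ring
  | succ n ih =>
    refine ⟨ih.2, ?_⟩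
    have hr := hrec (n + 2) (by omega)
    simp only [show n + 2 - 1 = n + 1 from rfl, show n + 2 - 2 = n from rfl] at hr
    have hV : V (n + 2) = (X ^ (-2 : ℤ) * V n - (X - X⁻¹) * V (n + 1)) / X ^ 2 := by
      rw [eq_div_iff (pow_ne_zero 2 hXne)]
      linear_combination -hr
    rw [hV, ih.1, ih.2]
    simp only [hf]
    rw [hzp n, hzp (n + 1), hzp (n + 2)]
    have e2 : X ^ (-2 : ℤ) = (X ^ 2)⁻¹ := by
      rw [zpow_neg, zpow_two]; norm_num [sq]
    rw [e2]
    have p1 : (-X⁻¹) ^ (n + 1) = (-X⁻¹) ^ n * (-X⁻¹) := pow_succ _ _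
    have p2 : (-X⁻¹) ^ (n + 2) = (-X⁻¹) ^ n * (-X⁻¹) ^ 2 := by ring
    have p3 : (-X ^ 2) ^ (n + 1) = (-X ^ 2) ^ n * (-X ^ 2) := pow_succ _ _
    have p4 : (-X ^ 2) ^ (n + 2) = (-X ^ 2) ^ n * (-X ^ 2) ^ 2 := by ring
    have p5 : X ^ (3 * (n + 1)) = X ^ (3 * n) * X ^ 3 := by rw [← pow_add]; ring_nf
    have p6 : X ^ (3 * (n + 2)) = X ^ (3 * n) * X ^ 6 := by rw [← pow_add]; ring_nf
    rw [p1, p2, p3, p4, p5, p6]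
    simp only [mul_inv]
    generalize (-X⁻¹) ^ n = a
    generalize (-X ^ 2) ^ n = b
    generalize (X ^ (3 * n) : K)⁻¹ = e
    rw [div_eq_iff (pow_ne_zero 2 hXne)]
    field_simp
    have hC : (X * (X * X * (X ^ 3 * (1 + X ^ 2))) : K) ≠ 0 :=
      mul_ne_zero hXne (mul_ne_zero (mul_ne_zero hXne hXne)
        (mul_ne_zero (pow_ne_zero _ hXne) hsq))
    ring

theorem stmt_8 (V : ℕ → RatFunc ℚ)
    (h0 : V 0 = -RatFunc.X - (RatFunc.X)⁻¹)
    (h1 : V 1 = 1)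
    (hrec : ∀ m : ℕ, 2 ≤ m →
      (RatFunc.X : RatFunc ℚ) ^ (-2 : ℤ) * V (m - 2) - RatFunc.X ^ 2 * V m
        = (RatFunc.X - (RatFunc.X)⁻¹) * V (m - 1)) :
    ∀ m : ℕ,
      V m = (-(RatFunc.X : RatFunc ℚ)⁻¹) ^ m * (-RatFunc.X - (RatFunc.X)⁻¹)
        + (-(RatFunc.X : RatFunc ℚ) ^ (1 - 3 * (m : ℤ)))
            * (1 - (-(RatFunc.X : RatFunc ℚ) ^ 2) ^ m) / (1 + RatFunc.X ^ 2) := by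
  exact stmt_8_aux RatFunc.X stmt_8_X_ne stmt_8_one_add_sq_ne V h0 h1 hrec
end
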